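/- Let U be a 4×4 complex matrix written in 2×2 blocks as U = fromBlocks U₁₁ U₁₂ U₂₁ U₂₂. Fix k, m, n with n ≥ 1 and m + n ≤ k, and define U_{(k;m,m+n)} := I_{2^{m-1}} ⊗ fromBlocks (I_{2^{n-1}} ⊗ U₁₁) (I_{2^{n-1}} ⊗ U₁₂) (I_{2^{n-1}} ⊗ U₂₁) (I_{2^{n-1}} ⊗ U₂₂) ⊗ I_{2^{k-m-n}}. Then U_{(k;m,m+n)} = SWAP_{(k;m+1,m+n)} · (I_{2^{m-1}} ⊗ U ⊗ I_{2^{k-m-1}}) · SWAP_{(k;m+1,m+n)}, where SWAP_{(k;m+1,m+n)} := I_{2^m} ⊗ S_n ⊗ I_{2^{k-m-n}} and S_n := fromBlocks (I_{2^{n-2}} ⊗ P₀) (I_{2^{n-2}} ⊗ L₁) (I_{2^{n-2}} ⊗ L₀) (I_{2^{n-2}} ⊗ P₁) (for n ≥ 2; for n = 1 the right-hand side is just I_{2^{m-1}} ⊗ U ⊗ I_{2^{k-m-1}}). -/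

import Mathlib

open Matrix Kronecker

noncomputable def P0 : Matrix (Fin 2) (Fin 2) ℂ := Matrix.single 0 0 1
noncomputable def P1 : Matrix (Fin 2) (Fin 2) ℂ := Matrix.single 1 1 1
noncomputable def L0 : Matrix (Fin 2) (Fin 2) ℂ := Matrix.single 0 1 1
noncomputable def L1 : Matrix (Fin 2) (Fin 2) ℂ := Matrix.single 1 0 1

/-- The canonical identification of a qubit index `q : Fin 2` together with remaining
indices `x : α` with an element of `α ⊕ α` (block splitting along the qubit `q`). -/
def qSplit {α : Type*} (q : Fin 2) (x : α) : α ⊕ α :=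
  if q = 0 then Sum.inl x else Sum.inr x

/-- The common index set for a `k`-qubit register split as
(qubits `1..m-1`) × (qubit `m`) × (qubit `m+1`) × (qubits `m+2..m+n-1`) × (qubit `m+n`) ×
(qubits `m+n+1..k`), where `A`, `B`, `C` index the three grouped registers. -/
@[reducible] def Tix (A B C : Type*) := A × Fin 2 × Fin 2 × B × Fin 2 × C

/-- Identification of `Tix` with the index set of
`I ⊗ fromBlocks (I_{2^{n-1}} ⊗ U₁₁) (I_{2^{n-1}} ⊗ U₁₂) (I_{2^{n-1}} ⊗ U₂₁) (I_{2^{n-1}} ⊗ U₂₂) ⊗ I`,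
where the inner identity is factored as `I_2 ⊗ I_{2^{n-2}}`. -/
def e₁ {A B C : Type*} : Tix A B C → (A × (((Fin 2 × B) × Fin 2) ⊕ ((Fin 2 × B) × Fin 2))) × C :=
  fun ⟨pa, q1, q2, pc, q3, pb⟩ => ((pa, qSplit q1 ((q2, pc), q3)), pb)

/-- Identification of `Tix` with the index set of `SWAP_{(k;m+1,m+n)} = I_{2^m} ⊗ Sₙ ⊗ I`. -/
def e₂ {A B C : Type*} : Tix A B C → ((A × Fin 2) × ((B × Fin 2) ⊕ (B × Fin 2))) × C :=
  fun ⟨pa, q1, q2, pc, q3, pb⟩ => (((pa, q1), qSplit q2 (pc, q3)), pb)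

/-- Identification of `Tix` with the index set of `I_{2^{m-1}} ⊗ U ⊗ I_{2^{k-m-1}}`. -/
def e₃ {A B C : Type*} : Tix A B C → (A × (Fin 2 ⊕ Fin 2)) × ((B × Fin 2) × C) :=
  fun ⟨pa, q1, q2, pc, q3, pb⟩ => ((pa, qSplit q1 q2), ((pc, q3), pb))

/-!
In the coordinates `Tix`, `SWAP_{(k;m+1,m+n)}` is the permutation matrix of the exchange of
qubits `m+1` and `m+n`, so conjugating by it only relabels entries. After the relabelling, the
entries of `I ⊗ U ⊗ I` are those of `U_{(k;m,m+n)}`, because an identity Kronecker factor can be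
pulled out of all four blocks of `fromBlocks` at once.
-/

def Tix.swapQubits {A B C : Type*} : Tix A B C ≃ Tix A B C where
  toFun := fun ⟨a, q₁, q₂, c, q₃, b⟩ => (a, q₁, q₃, c, q₂, b)
  invFun := fun ⟨a, q₁, q₂, c, q₃, b⟩ => (a, q₁, q₃, c, q₂, b)
  left_inv := fun ⟨_, _, _, _, _, _⟩ => rfl
  right_inv := fun ⟨_, _, _, _, _, _⟩ => rfl

theorem Tix.swapQubits_symm {A B C : Type*} :
    (Tix.swapQubits : Tix A B C ≃ Tix A B C).symm = Tix.swapQubits :=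
  rfl

theorem fromBlocks_one_kronecker_apply_qSplit {R N α β : Type*} [MulZeroOneClass R]
    [DecidableEq N] (U₁₁ U₁₂ U₂₁ U₂₂ : Matrix α β R) (q q' : Fin 2) (p p' : N) (x : α) (y : β) :
    fromBlocks ((1 : Matrix N N R) ⊗ₖ U₁₁) ((1 : Matrix N N R) ⊗ₖ U₁₂)
        ((1 : Matrix N N R) ⊗ₖ U₂₁) ((1 : Matrix N N R) ⊗ₖ U₂₂)
        (qSplit q (p, x)) (qSplit q' (p', y)) =
      (1 : Matrix N N R) p p' * fromBlocks U₁₁ U₁₂ U₂₁ U₂₂ (qSplit q x) (qSplit q' y) := by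
  fin_cases q <;> fin_cases q' <;> rfl

theorem swapGate_apply_qSplit (i j i' j' : Fin 2) :
    fromBlocks P0 L1 L0 P1 (qSplit i j) (qSplit i' j') = if i = j' ∧ j = i' then 1 else 0 := by
  fin_cases i <;> fin_cases j <;> fin_cases i' <;> fin_cases j' <;>
    simp [qSplit, P0, P1, L0, L1, Matrix.single]

theorem swapMatrix_submatrix_e₂ {A B C : Type*} [DecidableEq A] [DecidableEq B]
    [DecidableEq C] :
    ((1 : Matrix (A × Fin 2) (A × Fin 2) ℂ) ⊗ₖ
          fromBlocks ((1 : Matrix B B ℂ) ⊗ₖ P0) ((1 : Matrix B B ℂ) ⊗ₖ L1)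
            ((1 : Matrix B B ℂ) ⊗ₖ L0) ((1 : Matrix B B ℂ) ⊗ₖ P1) ⊗ₖ
          (1 : Matrix C C ℂ)).submatrix e₂ e₂ =
      (Tix.swapQubits.toPEquiv.toMatrix : Matrix (Tix A B C) (Tix A B C) ℂ) := by
  ext ⟨a, q₁, q₂, c, q₃, b⟩ ⟨a', q₁', q₂', c', q₃', b'⟩
  simp only [submatrix_apply, e₂, kroneckerMap_apply, fromBlocks_one_kronecker_apply_qSplit,
    swapGate_apply_qSplit, PEquiv.toMatrix_apply, Equiv.toPEquiv_apply, Option.mem_def,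
    Option.some.injEq, Tix.swapQubits, Equiv.coe_fn_mk, one_apply, Prod.mk.injEq]
  split_ifs <;> simp_all

theorem gate_submatrix_e₃_submatrix_swapQubits {R A B C : Type*} [MulZeroOneClass R]
    [DecidableEq A] [DecidableEq B] [DecidableEq C] (U₁₁ U₁₂ U₂₁ U₂₂ : Matrix (Fin 2) (Fin 2) R) :
    (((1 : Matrix A A R) ⊗ₖ fromBlocks U₁₁ U₁₂ U₂₁ U₂₂ ⊗ₖ
          (1 : Matrix ((B × Fin 2) × C) ((B × Fin 2) × C) R)).submatrix e₃ e₃).submatrix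
        Tix.swapQubits Tix.swapQubits =
      ((1 : Matrix A A R) ⊗ₖ
          fromBlocks ((1 : Matrix (Fin 2 × B) (Fin 2 × B) R) ⊗ₖ U₁₁)
            ((1 : Matrix (Fin 2 × B) (Fin 2 × B) R) ⊗ₖ U₁₂)
            ((1 : Matrix (Fin 2 × B) (Fin 2 × B) R) ⊗ₖ U₂₁)
            ((1 : Matrix (Fin 2 × B) (Fin 2 × B) R) ⊗ₖ U₂₂) ⊗ₖ
          (1 : Matrix C C R)).submatrix e₁ e₁ := by
  ext ⟨a, q₁, q₂, c, q₃, b⟩ ⟨a', q₁', q₂', c', q₃', b'⟩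
  simp only [submatrix_apply, e₁, e₃, kroneckerMap_apply, fromBlocks_one_kronecker_apply_qSplit,
    Tix.swapQubits, Equiv.coe_fn_mk, one_apply, Prod.mk.injEq]
  split_ifs <;> simp_all

theorem binaryGate_eq_swap_conj_general (k m n : ℕ)
    (U11 U12 U21 U22 : Matrix (Fin 2) (Fin 2) ℂ) :
    (((1 : Matrix (Fin (2 ^ (m - 1))) (Fin (2 ^ (m - 1))) ℂ) ⊗ₖ
        Matrix.fromBlocks
          ((1 : Matrix (Fin 2 × Fin (2 ^ (n - 2))) (Fin 2 × Fin (2 ^ (n - 2))) ℂ) ⊗ₖ U11)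
          ((1 : Matrix (Fin 2 × Fin (2 ^ (n - 2))) (Fin 2 × Fin (2 ^ (n - 2))) ℂ) ⊗ₖ U12)
          ((1 : Matrix (Fin 2 × Fin (2 ^ (n - 2))) (Fin 2 × Fin (2 ^ (n - 2))) ℂ) ⊗ₖ U21)
          ((1 : Matrix (Fin 2 × Fin (2 ^ (n - 2))) (Fin 2 × Fin (2 ^ (n - 2))) ℂ) ⊗ₖ U22) ⊗ₖ
        (1 : Matrix (Fin (2 ^ (k - m - n))) (Fin (2 ^ (k - m - n))) ℂ)).submatrix e₁ e₁) =
      (((1 : Matrix (Fin (2 ^ (m - 1)) × Fin 2) (Fin (2 ^ (m - 1)) × Fin 2) ℂ) ⊗ₖ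
          Matrix.fromBlocks
            ((1 : Matrix (Fin (2 ^ (n - 2))) (Fin (2 ^ (n - 2))) ℂ) ⊗ₖ P0)
            ((1 : Matrix (Fin (2 ^ (n - 2))) (Fin (2 ^ (n - 2))) ℂ) ⊗ₖ L1)
            ((1 : Matrix (Fin (2 ^ (n - 2))) (Fin (2 ^ (n - 2))) ℂ) ⊗ₖ L0)
            ((1 : Matrix (Fin (2 ^ (n - 2))) (Fin (2 ^ (n - 2))) ℂ) ⊗ₖ P1) ⊗ₖ
          (1 : Matrix (Fin (2 ^ (k - m - n))) (Fin (2 ^ (k - m - n))) ℂ)).submatrix e₂ e₂) *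
      (((1 : Matrix (Fin (2 ^ (m - 1))) (Fin (2 ^ (m - 1))) ℂ) ⊗ₖ
          Matrix.fromBlocks U11 U12 U21 U22 ⊗ₖ
          (1 : Matrix ((Fin (2 ^ (n - 2)) × Fin 2) × Fin (2 ^ (k - m - n)))
            ((Fin (2 ^ (n - 2)) × Fin 2) × Fin (2 ^ (k - m - n))) ℂ)).submatrix e₃ e₃) *
      (((1 : Matrix (Fin (2 ^ (m - 1)) × Fin 2) (Fin (2 ^ (m - 1)) × Fin 2) ℂ) ⊗ₖ
          Matrix.fromBlocks
            ((1 : Matrix (Fin (2 ^ (n - 2))) (Fin (2 ^ (n - 2))) ℂ) ⊗ₖ P0)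
            ((1 : Matrix (Fin (2 ^ (n - 2))) (Fin (2 ^ (n - 2))) ℂ) ⊗ₖ L1)
            ((1 : Matrix (Fin (2 ^ (n - 2))) (Fin (2 ^ (n - 2))) ℂ) ⊗ₖ L0)
            ((1 : Matrix (Fin (2 ^ (n - 2))) (Fin (2 ^ (n - 2))) ℂ) ⊗ₖ P1) ⊗ₖ
          (1 : Matrix (Fin (2 ^ (k - m - n))) (Fin (2 ^ (k - m - n))) ℂ)).submatrix e₂ e₂) := by
  rw [swapMatrix_submatrix_e₂, PEquiv.toMatrix_toPEquiv_mul, PEquiv.mul_toMatrix_toPEquiv,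
    Tix.swapQubits_symm, submatrix_submatrix, Function.comp_id, Function.id_comp,
    gate_submatrix_e₃_submatrix_swapQubits]

/-- For a binary gate `U = fromBlocks U₁₁ U₁₂ U₂₁ U₂₂`, the operator
`U_{(k;m,m+n)} = I_{2^{m-1}} ⊗ fromBlocks (I_{2^{n-1}} ⊗ Uᵢⱼ) ⊗ I_{2^{k-m-n}}` equals
`SWAP_{(k;m+1,m+n)} · (I_{2^{m-1}} ⊗ U ⊗ I_{2^{k-m-1}}) · SWAP_{(k;m+1,m+n)}`, where
`SWAP_{(k;m+1,m+n)} = I_{2^m} ⊗ Sₙ ⊗ I_{2^{k-m-n}}` and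
`Sₙ = fromBlocks (I_{2^{n-2}} ⊗ P₀) (I_{2^{n-2}} ⊗ L₁) (I_{2^{n-2}} ⊗ L₀) (I_{2^{n-2}} ⊗ P₁)`
(all matrices are compared on the common index set `Tix`). -/
theorem binaryGate_eq_swap_conj (k m n : ℕ) (hm : 1 ≤ m) (hn : 2 ≤ n) (hk : m + n ≤ k)
    (U11 U12 U21 U22 : Matrix (Fin 2) (Fin 2) ℂ) :
    (((1 : Matrix (Fin (2 ^ (m - 1))) (Fin (2 ^ (m - 1))) ℂ) ⊗ₖ
        Matrix.fromBlocks
          ((1 : Matrix (Fin 2 × Fin (2 ^ (n - 2))) (Fin 2 × Fin (2 ^ (n - 2))) ℂ) ⊗ₖ U11)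
          ((1 : Matrix (Fin 2 × Fin (2 ^ (n - 2))) (Fin 2 × Fin (2 ^ (n - 2))) ℂ) ⊗ₖ U12)
          ((1 : Matrix (Fin 2 × Fin (2 ^ (n - 2))) (Fin 2 × Fin (2 ^ (n - 2))) ℂ) ⊗ₖ U21)
          ((1 : Matrix (Fin 2 × Fin (2 ^ (n - 2))) (Fin 2 × Fin (2 ^ (n - 2))) ℂ) ⊗ₖ U22) ⊗ₖ
        (1 : Matrix (Fin (2 ^ (k - m - n))) (Fin (2 ^ (k - m - n))) ℂ)).submatrix e₁ e₁) =
      (((1 : Matrix (Fin (2 ^ (m - 1)) × Fin 2) (Fin (2 ^ (m - 1)) × Fin 2) ℂ) ⊗ₖ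
          Matrix.fromBlocks
            ((1 : Matrix (Fin (2 ^ (n - 2))) (Fin (2 ^ (n - 2))) ℂ) ⊗ₖ P0)
            ((1 : Matrix (Fin (2 ^ (n - 2))) (Fin (2 ^ (n - 2))) ℂ) ⊗ₖ L1)
            ((1 : Matrix (Fin (2 ^ (n - 2))) (Fin (2 ^ (n - 2))) ℂ) ⊗ₖ L0)
            ((1 : Matrix (Fin (2 ^ (n - 2))) (Fin (2 ^ (n - 2))) ℂ) ⊗ₖ P1) ⊗ₖ
          (1 : Matrix (Fin (2 ^ (k - m - n))) (Fin (2 ^ (k - m - n))) ℂ)).submatrix e₂ e₂) *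
      (((1 : Matrix (Fin (2 ^ (m - 1))) (Fin (2 ^ (m - 1))) ℂ) ⊗ₖ
          Matrix.fromBlocks U11 U12 U21 U22 ⊗ₖ
          (1 : Matrix ((Fin (2 ^ (n - 2)) × Fin 2) × Fin (2 ^ (k - m - n)))
            ((Fin (2 ^ (n - 2)) × Fin 2) × Fin (2 ^ (k - m - n))) ℂ)).submatrix e₃ e₃) *
      (((1 : Matrix (Fin (2 ^ (m - 1)) × Fin 2) (Fin (2 ^ (m - 1)) × Fin 2) ℂ) ⊗ₖ
          Matrix.fromBlocks
            ((1 : Matrix (Fin (2 ^ (n - 2))) (Fin (2 ^ (n - 2))) ℂ) ⊗ₖ P0)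
            ((1 : Matrix (Fin (2 ^ (n - 2))) (Fin (2 ^ (n - 2))) ℂ) ⊗ₖ L1)
            ((1 : Matrix (Fin (2 ^ (n - 2))) (Fin (2 ^ (n - 2))) ℂ) ⊗ₖ L0)
            ((1 : Matrix (Fin (2 ^ (n - 2))) (Fin (2 ^ (n - 2))) ℂ) ⊗ₖ P1) ⊗ₖ
          (1 : Matrix (Fin (2 ^ (k - m - n))) (Fin (2 ^ (k - m - n))) ℂ)).submatrix e₂ e₂) :=
  binaryGate_eq_swap_conj_general k m n U11 U12 U21 U22
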